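/- arXiv:2202.07608 — 2 statements merged into one kernel-verified Lean document; each statement's English description precedes it below -/
import Mathlib

section
/- Let M be a graphic matrix and D a symmetric division of M, and let d ≥ 2 be an integer. Suppose the adjacency matrix M^H_D of the horizontal compression G^H_D (rows and columns in the natural order inherited from M) contains a d-almost mixed minor. Then M contains a d-almost mixed minor L such that: (1) L is a coarsening of D; and (2) each row block of L is the union of at least two row blocks of D and each column block of L is the union of at least two column blocks of D. -/
namespace TwPaper


/-- A `{0,1}`-matrix with `m` rows and `n` columns, entries modeled as `Bool`. -/
abbrev BMatrix (m n : ℕ) := Matrix (Fin m) (Fin n) Bool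

/-- The submatrix of `M` given by rows `R` and columns `C` is horizontal:
all its rows are constant. -/
def Horizontal {m n : ℕ} (M : BMatrix m n) (R : Set (Fin m)) (C : Set (Fin n)) : Prop :=
  ∀ i ∈ R, ∀ j ∈ C, ∀ j' ∈ C, M i j = M i j'

/-- The submatrix of `M` given by rows `R` and columns `C` is vertical:
all its columns are constant. -/
def Vertical {m n : ℕ} (M : BMatrix m n) (R : Set (Fin m)) (C : Set (Fin n)) : Prop :=
  ∀ j ∈ C, ∀ i ∈ R, ∀ i' ∈ R, M i j = M i' j

/-- The submatrix of `M` given by rows `R` and columns `C` is mixed: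
neither horizontal nor vertical. -/
def Mixed {m n : ℕ} (M : BMatrix m n) (R : Set (Fin m)) (C : Set (Fin n)) : Prop :=
  ¬ Horizontal M R C ∧ ¬ Vertical M R C

/-- The submatrix of `M` given by rows `R` and columns `C` is constant `0`. -/
def ConstantZero {m n : ℕ} (M : BMatrix m n) (R : Set (Fin m)) (C : Set (Fin n)) : Prop :=
  ∀ i ∈ R, ∀ j ∈ C, M i j = false

/-- A `d`-division of an `m × n` matrix: a partition of the rows into `d` contiguous
nonempty blocks, and likewise for columns.  It is encoded by the monotone surjective
maps sending a row (resp. column) to the index of its block. -/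
structure Division (m n d : ℕ) where
  row : Fin m → Fin d
  col : Fin n → Fin d
  row_mono : Monotone row
  col_mono : Monotone col
  row_surj : Function.Surjective row
  col_surj : Function.Surjective col

/-- The `i`-th row block of a division. -/
def Division.rowBlock {m n d : ℕ} (D : Division m n d) (i : Fin d) : Set (Fin m) :=
  {a | D.row a = i}

/-- The `j`-th column block of a division. -/
def Division.colBlock {m n d : ℕ} (D : Division m n d) (j : Fin d) : Set (Fin n) :=
  {b | D.col b = j}

/-- The zone `D[i,j]` of the division `D` of `M` is mixed. -/
def Division.ZoneMixed {m n d : ℕ} (D : Division m n d) (M : BMatrix m n) (i j : Fin d) : Prop :=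
  Mixed M (D.rowBlock i) (D.colBlock j)

/-- A `d`-division is a `d`-almost mixed minor if every off-diagonal zone is mixed. -/
def IsAlmostMixedMinor {m n d : ℕ} (M : BMatrix m n) (D : Division m n d) : Prop :=
  ∀ i j : Fin d, i ≠ j → D.ZoneMixed M i j

/-- A `d`-division is a `d`-mixed minor if every zone is mixed. -/
def IsMixedMinor {m n d : ℕ} (M : BMatrix m n) (D : Division m n d) : Prop :=
  ∀ i j : Fin d, D.ZoneMixed M i j

/-- `M` is `d`-almost mixed-free: it has no `d`-almost mixed minor. -/
def AlmostMixedFree {m n : ℕ} (d : ℕ) (M : BMatrix m n) : Prop :=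
  ¬ ∃ D : Division m n d, IsAlmostMixedMinor M D

/-- `M` is `d`-mixed-free: it has no `d`-mixed minor. -/
def MixedFree {m n : ℕ} (d : ℕ) (M : BMatrix m n) : Prop :=
  ¬ ∃ D : Division m n d, IsMixedMinor M D

/-- A graphic matrix: symmetric with zero diagonal. -/
def Graphic {n : ℕ} (M : BMatrix n n) : Prop :=
  (∀ i j, M i j = M j i) ∧ (∀ i, M i i = false)

/-- A division of a square matrix is symmetric if rows and columns are
partitioned in exactly the same way. -/
def Division.Symm {n d : ℕ} (D : Division n n d) : Prop := D.row = D.col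

/-- `L` is a coarsening of `D`: every row (resp. column) block of `L` is a union of
consecutive row (resp. column) blocks of `D`. -/
def Coarsens {m n d e : ℕ} (L : Division m n e) (D : Division m n d) : Prop :=
  (∀ a a' : Fin m, D.row a = D.row a' → L.row a = L.row a') ∧
  (∀ b b' : Fin n, D.col b = D.col b' → L.col b = L.col b')

/-- The zone is horizontal and not constant `0`. -/
def HorizNonzero {m n : ℕ} (M : BMatrix m n) (R : Set (Fin m)) (C : Set (Fin n)) : Prop :=
  Horizontal M R C ∧ ¬ ConstantZero M R C

/-- The zone is vertical and not constant `0`. -/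
def VertNonzero {m n : ℕ} (M : BMatrix m n) (R : Set (Fin m)) (C : Set (Fin n)) : Prop :=
  Vertical M R C ∧ ¬ ConstantZero M R C

/-- The horizontal compression `G^H_D` of a graphic matrix `M` along a symmetric
division `D` with `s` blocks: vertices are the blocks, and `i j` (for `i < j`) are
adjacent iff the zone `D[i,j]` is horizontal and not constant `0`. -/
def horizCompression {n s : ℕ} (M : BMatrix n n) (D : Division n n s) : SimpleGraph (Fin s) :=
  SimpleGraph.fromRel (fun i j => i < j ∧ HorizNonzero M (D.rowBlock i) (D.colBlock j))

/-- The vertical compression `G^V_D`. -/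
def vertCompression {n s : ℕ} (M : BMatrix n n) (D : Division n n s) : SimpleGraph (Fin s) :=
  SimpleGraph.fromRel (fun i j => i < j ∧ VertNonzero M (D.rowBlock i) (D.colBlock j))

/-- The mixed compression `G^M_D`: `i ≠ j` are adjacent iff the zone `D[i,j]` is mixed. -/
def mixedCompression {n s : ℕ} (M : BMatrix n n) (D : Division n n s) : SimpleGraph (Fin s) :=
  SimpleGraph.fromRel (fun i j => D.ZoneMixed M i j)

open Classical in
/-- The adjacency matrix of a graph on `Fin s`, rows and columns in the natural order. -/
noncomputable def graphMatrix {s : ℕ} (G : SimpleGraph (Fin s)) : BMatrix s s :=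
  fun i j => if G.Adj i j then true else false

open Classical in
/-- The adjacency matrix of `G` under the vertex ordering given by the
enumeration `e` of its vertices. -/
noncomputable def adjMatrix {V : Type*} [Fintype V] (G : SimpleGraph V)
    (e : Fin (Fintype.card V) ≃ V) : BMatrix (Fintype.card V) (Fintype.card V) :=
  fun i j => if G.Adj (e i) (e j) then true else false

/-- `G` admits, under some linear ordering of its vertices, a `d`-almost mixed-free
adjacency matrix. -/
def AdmitsAMFree {V : Type*} [Fintype V] (d : ℕ) (G : SimpleGraph V) : Prop :=
  ∃ e : Fin (Fintype.card V) ≃ V, AlmostMixedFree d (adjMatrix G e)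

/-!
Take for `L` the coarsening of `D` along the minor `E` of `M^H_D`. If a zone of `L` were
horizontal in `M`, the corresponding zone of `M^H_D` would be horizontal: given a block `r` of
its row range and blocks `c, c'` of its (order-convex) column range, either `r` itself lies in
the column range, and then the zero diagonal of `M` makes every zone between `r` and that range
constant `0`, or `c, c'` lie on the same side of `r`, and then `D[r,c]`, `D[r,c']` (or, by
symmetry, `D[c,r]`, `D[c',r]`) are horizontal and nonzero together. Transposing handles vertical
zones. Each block of `L` contains two blocks of `D` because a mixed zone of `E` has at least two
rows and two columns.
-/

section Zones

variable {m n : ℕ} {M : BMatrix m n} {R R₁ R₂ : Set (Fin m)} {C C₁ C₂ : Set (Fin n)}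

theorem Horizontal.mono (h : Horizontal M R C) (hR : R₁ ⊆ R) (hC : C₁ ⊆ C) :
    Horizontal M R₁ C₁ :=
  fun a ha b hb b' hb' => h a (hR ha) b (hC hb) b' (hC hb')

theorem ConstantZero.mono (h : ConstantZero M R C) (hR : R₁ ⊆ R) (hC : C₁ ⊆ C) :
    ConstantZero M R₁ C₁ :=
  fun a ha b hb => h a (hR ha) b (hC hb)

theorem horizontal_of_subsingleton (hC : C.Subsingleton) : Horizontal M R C :=
  fun _ _ _ hb _ hb' => by rw [hC hb hb']

theorem vertical_of_subsingleton (hR : R.Subsingleton) : Vertical M R C :=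
  fun _ _ _ ha _ ha' => by rw [hR ha ha']

theorem Mixed.nontrivial_rows (h : Mixed M R C) : R.Nontrivial :=
  Set.not_subsingleton_iff.mp fun hR => h.2 (vertical_of_subsingleton hR)

theorem Mixed.nontrivial_cols (h : Mixed M R C) : C.Nontrivial :=
  Set.not_subsingleton_iff.mp fun hC => h.1 (horizontal_of_subsingleton hC)

theorem Horizontal.constantZero_of_subset (h : Horizontal M R C) (hC₁ : C₁ ⊆ C)
    (hne : C₁.Nonempty) (h₀ : ConstantZero M R C₁) : ConstantZero M R C := by
  obtain ⟨b₁, hb₁⟩ := hne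
  intro a ha b hb
  rw [h a ha b hb b₁ (hC₁ hb₁)]
  exact h₀ a ha b₁ hb₁

theorem Horizontal.horizNonzero_iff (h : Horizontal M R C) (hC₁ : C₁ ⊆ C) (hC₂ : C₂ ⊆ C)
    (hne₁ : C₁.Nonempty) (hne₂ : C₂.Nonempty) :
    HorizNonzero M R C₁ ↔ HorizNonzero M R C₂ :=
  and_congr (iff_of_true (h.mono subset_rfl hC₁) (h.mono subset_rfl hC₂)) <| not_congr
    ⟨fun h₀ => (h.constantZero_of_subset hC₁ hne₁ h₀).mono subset_rfl hC₂,
      fun h₀ => (h.constantZero_of_subset hC₂ hne₂ h₀).mono subset_rfl hC₁⟩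

theorem Vertical.horizontal_of_subset (h : Vertical M R C) (hR₁ : R₁ ⊆ R)
    (hne : R₁.Nonempty) (hH : Horizontal M R₁ C) : Horizontal M R C := by
  obtain ⟨a₁, ha₁⟩ := hne
  intro a ha b hb b' hb'
  rw [h b hb a ha a₁ (hR₁ ha₁), h b' hb' a ha a₁ (hR₁ ha₁)]
  exact hH a₁ ha₁ b hb b' hb'

theorem Vertical.constantZero_of_subset (h : Vertical M R C) (hR₁ : R₁ ⊆ R)
    (hne : R₁.Nonempty) (h₀ : ConstantZero M R₁ C) : ConstantZero M R C := by
  obtain ⟨a₁, ha₁⟩ := hne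
  intro a ha b hb
  rw [h b hb a ha a₁ (hR₁ ha₁)]
  exact h₀ a₁ ha₁ b hb

theorem Vertical.horizNonzero_iff (h : Vertical M R C) (hR₁ : R₁ ⊆ R) (hR₂ : R₂ ⊆ R)
    (hne₁ : R₁.Nonempty) (hne₂ : R₂.Nonempty) :
    HorizNonzero M R₁ C ↔ HorizNonzero M R₂ C := by
  have hH : Horizontal M R₁ C ↔ Horizontal M R₂ C :=
    ⟨fun hH => (h.horizontal_of_subset hR₁ hne₁ hH).mono hR₂ subset_rfl,
      fun hH => (h.horizontal_of_subset hR₂ hne₂ hH).mono hR₁ subset_rfl⟩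
  have h₀ : ConstantZero M R₁ C ↔ ConstantZero M R₂ C :=
    ⟨fun h₀ => (h.constantZero_of_subset hR₁ hne₁ h₀).mono hR₂ subset_rfl,
      fun h₀ => (h.constantZero_of_subset hR₂ hne₂ h₀).mono hR₁ subset_rfl⟩
  exact and_congr hH (not_congr h₀)

end Zones

section SymmetricMatrix

variable {n : ℕ} {M : BMatrix n n} {R C : Set (Fin n)}

theorem vertical_iff_horizontal_of_symm (hM : ∀ a b, M a b = M b a) :
    Vertical M R C ↔ Horizontal M C R := by
  refine ⟨fun h a ha b hb b' hb' => ?_, fun h b hb a ha a' ha' => ?_⟩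
  · rw [hM a b, hM a b', h a ha b hb b' hb']
  · rw [hM a b, hM a' b, h b hb a ha a' ha']

theorem constantZero_comm_of_symm (hM : ∀ a b, M a b = M b a) :
    ConstantZero M R C ↔ ConstantZero M C R :=
  ⟨fun h a ha b hb => hM a b ▸ h b hb a ha, fun h a ha b hb => hM a b ▸ h b hb a ha⟩

theorem Horizontal.constantZero_of_subset_of_diag (hM : ∀ a, M a a = false)
    (h : Horizontal M R C) (hRC : R ⊆ C) : ConstantZero M R C :=
  fun a ha b hb => h a ha b hb a (hRC ha) ▸ hM a

end SymmetricMatrix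

section Division

variable {m n s d : ℕ}

theorem Division.colBlock_nonempty (D : Division m n d) (j : Fin d) : (D.colBlock j).Nonempty :=
  D.col_surj j

theorem Division.ordConnected_rowBlock (D : Division m n d) (i : Fin d) :
    (D.rowBlock i).OrdConnected :=
  Set.ordConnected_singleton.preimage_mono D.row_mono

theorem Division.ordConnected_colBlock (D : Division m n d) (j : Fin d) :
    (D.colBlock j).OrdConnected :=
  Set.ordConnected_singleton.preimage_mono D.col_mono

theorem Division.Symm.rowBlock_eq_colBlock {D : Division n n d} (hD : D.Symm) (i : Fin d) :
    D.rowBlock i = D.colBlock i := by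
  simp only [Division.rowBlock, Division.colBlock, show D.row = D.col from hD]

def Division.coarsen (D : Division m n s) (E : Division s s d) : Division m n d where
  row := E.row ∘ D.row
  col := E.col ∘ D.col
  row_mono := E.row_mono.comp D.row_mono
  col_mono := E.col_mono.comp D.col_mono
  row_surj := E.row_surj.comp D.row_surj
  col_surj := E.col_surj.comp D.col_surj

theorem Division.coarsens_coarsen (D : Division m n s) (E : Division s s d) :
    Coarsens (D.coarsen E) D :=
  ⟨fun _ _ h => congrArg E.row h, fun _ _ h => congrArg E.col h⟩

theorem Division.exists_row_ne_of_nontrivial (D : Division m n s) {E : Division s s d}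
    {i : Fin d} (h : (E.rowBlock i).Nontrivial) :
    ∃ a a', (D.coarsen E).row a = i ∧ (D.coarsen E).row a' = i ∧ D.row a ≠ D.row a' := by
  obtain ⟨p, hp, p', hp', hne⟩ := h
  obtain ⟨a, rfl⟩ := D.row_surj p
  obtain ⟨a', rfl⟩ := D.row_surj p'
  exact ⟨a, a', hp, hp', hne⟩

theorem Division.exists_col_ne_of_nontrivial (D : Division m n s) {E : Division s s d}
    {j : Fin d} (h : (E.colBlock j).Nontrivial) :
    ∃ b b', (D.coarsen E).col b = j ∧ (D.coarsen E).col b' = j ∧ D.col b ≠ D.col b' := by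
  obtain ⟨q, hq, q', hq', hne⟩ := h
  obtain ⟨b, rfl⟩ := D.col_surj q
  obtain ⟨b', rfl⟩ := D.col_surj q'
  exact ⟨b, b', hq, hq', hne⟩

theorem IsAlmostMixedMinor.rowBlock_nontrivial {M : BMatrix m n} {E : Division m n d}
    (hE : IsAlmostMixedMinor M E) (hd : 2 ≤ d) (i : Fin d) : (E.rowBlock i).Nontrivial := by
  obtain ⟨j, hj⟩ := Fintype.exists_ne_of_one_lt_card (by rw [Fintype.card_fin]; omega) i
  exact (hE i j hj.symm).nontrivial_rows

theorem IsAlmostMixedMinor.colBlock_nontrivial {M : BMatrix m n} {E : Division m n d}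
    (hE : IsAlmostMixedMinor M E) (hd : 2 ≤ d) (j : Fin d) : (E.colBlock j).Nontrivial := by
  obtain ⟨i, hi⟩ := Fintype.exists_ne_of_one_lt_card (by rw [Fintype.card_fin]; omega) j
  exact (hE i j hi).nontrivial_cols

end Division

section Compression

variable {n s : ℕ}

theorem graphMatrix_eq_true_iff (G : SimpleGraph (Fin s)) (p q : Fin s) :
    graphMatrix G p q = true ↔ G.Adj p q := by
  classical
  by_cases h : G.Adj p q <;> simp [graphMatrix, h]

theorem graphMatrix_comm (G : SimpleGraph (Fin s)) (p q : Fin s) :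
    graphMatrix G p q = graphMatrix G q p := by
  rw [Bool.eq_iff_iff, graphMatrix_eq_true_iff, graphMatrix_eq_true_iff, G.adj_comm]

variable {M : BMatrix n n} {D : Division n n s} {S : Set (Fin s)} {r c c' : Fin s}

theorem horizCompression_adj_of_lt (hrc : r < c) :
    (horizCompression M D).Adj r c ↔ HorizNonzero M (D.rowBlock r) (D.colBlock c) := by
  simp only [horizCompression, SimpleGraph.fromRel_adj, hrc.ne, hrc, true_and,
    hrc.not_gt, false_and, or_false, ne_eq, not_false_eq_true]

theorem colBlock_subset_preimage (hc : c ∈ S) : D.colBlock c ⊆ D.col ⁻¹' S :=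
  fun b hb => show D.col b ∈ S from (show D.col b = c from hb).symm ▸ hc

theorem horizCompression_not_adj_of_mem (hM : Graphic M) (hD : D.Symm)
    (h : Horizontal M (D.rowBlock r) (D.col ⁻¹' S)) (hr : r ∈ S) (hc : c ∈ S) :
    ¬ (horizCompression M D).Adj r c := by
  have hzero : ConstantZero M (D.rowBlock r) (D.colBlock c) :=
    (h.constantZero_of_subset_of_diag hM.2
      (hD.rowBlock_eq_colBlock r ▸ colBlock_subset_preimage hr)).mono subset_rfl
      (colBlock_subset_preimage hc)
  rintro hadj
  rcases lt_or_gt_of_ne hadj.ne with hrc | hcr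
  · exact ((horizCompression_adj_of_lt hrc).mp hadj).2 hzero
  · refine ((horizCompression_adj_of_lt hcr).mp hadj.symm).2 ?_
    rwa [constantZero_comm_of_symm hM.1, ← hD.rowBlock_eq_colBlock r,
      hD.rowBlock_eq_colBlock c]

theorem horizCompression_adj_congr_of_lt (h : Horizontal M (D.rowBlock r) (D.col ⁻¹' S))
    (hc : c ∈ S) (hc' : c' ∈ S) (hrc : r < c) (hrc' : r < c') :
    (horizCompression M D).Adj r c ↔ (horizCompression M D).Adj r c' := by
  rw [horizCompression_adj_of_lt hrc, horizCompression_adj_of_lt hrc']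
  exact h.horizNonzero_iff (colBlock_subset_preimage hc) (colBlock_subset_preimage hc')
    (D.colBlock_nonempty c) (D.colBlock_nonempty c')

theorem horizCompression_adj_congr_of_gt (hM : ∀ a b, M a b = M b a) (hD : D.Symm)
    (h : Horizontal M (D.rowBlock r) (D.col ⁻¹' S))
    (hc : c ∈ S) (hc' : c' ∈ S) (hcr : c < r) (hc'r : c' < r) :
    (horizCompression M D).Adj r c ↔ (horizCompression M D).Adj r c' := by
  have hV : Vertical M (D.col ⁻¹' S) (D.colBlock r) := by
    rw [vertical_iff_horizontal_of_symm hM, ← hD.rowBlock_eq_colBlock]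
    exact h
  rw [SimpleGraph.adj_comm, horizCompression_adj_of_lt hcr, SimpleGraph.adj_comm,
    horizCompression_adj_of_lt hc'r, hD.rowBlock_eq_colBlock, hD.rowBlock_eq_colBlock]
  exact hV.horizNonzero_iff (colBlock_subset_preimage hc) (colBlock_subset_preimage hc')
    (D.colBlock_nonempty c) (D.colBlock_nonempty c')

variable {R : Set (Fin s)}

theorem horizontal_graphMatrix_horizCompression (hM : Graphic M) (hD : D.Symm)
    (hS : S.OrdConnected) (h : Horizontal M (D.row ⁻¹' R) (D.col ⁻¹' S)) :
    Horizontal (graphMatrix (horizCompression M D)) R S := by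
  intro r hr c hc c' hc'
  have hrow : Horizontal M (D.rowBlock r) (D.col ⁻¹' S) :=
    h.mono (fun a ha => show D.row a ∈ R from (show D.row a = r from ha).symm ▸ hr) subset_rfl
  rw [Bool.eq_iff_iff, graphMatrix_eq_true_iff, graphMatrix_eq_true_iff]
  by_cases hrS : r ∈ S
  · exact iff_of_false (horizCompression_not_adj_of_mem hM hD hrow hrS hc)
      (horizCompression_not_adj_of_mem hM hD hrow hrS hc')
  have not_between : ∀ {x y : Fin s}, x ∈ S → y ∈ S → x < r → r < y → False :=
    fun hx hy hxr hry => hrS (hS.out hx hy ⟨hxr.le, hry.le⟩)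
  rcases lt_or_gt_of_ne (ne_of_mem_of_not_mem hc hrS) with hcr | hrc <;>
    rcases lt_or_gt_of_ne (ne_of_mem_of_not_mem hc' hrS) with hc'r | hrc'
  · exact horizCompression_adj_congr_of_gt hM.1 hD hrow hc hc' hcr hc'r
  · exact (not_between hc hc' hcr hrc').elim
  · exact (not_between hc' hc hc'r hrc).elim
  · exact horizCompression_adj_congr_of_lt hrow hc hc' hrc hrc'

theorem vertical_graphMatrix_horizCompression (hM : Graphic M) (hD : D.Symm)
    (hR : R.OrdConnected) (h : Vertical M (D.row ⁻¹' R) (D.col ⁻¹' S)) :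
    Vertical (graphMatrix (horizCompression M D)) R S := by
  rw [vertical_iff_horizontal_of_symm (graphMatrix_comm _)]
  rw [vertical_iff_horizontal_of_symm hM.1] at h
  refine horizontal_graphMatrix_horizCompression hM hD hR ?_
  rwa [show D.row = D.col from hD] at h ⊢

theorem IsAlmostMixedMinor.coarsen (hM : Graphic M) (hD : D.Symm) {d : ℕ}
    {E : Division s s d} (hE : IsAlmostMixedMinor (graphMatrix (horizCompression M D)) E) :
    IsAlmostMixedMinor M (D.coarsen E) := fun i j hij =>
  ⟨fun h => (hE i j hij).1
      (horizontal_graphMatrix_horizCompression hM hD (E.ordConnected_colBlock j) h),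
    fun h => (hE i j hij).2
      (vertical_graphMatrix_horizCompression hM hD (E.ordConnected_rowBlock i) h)⟩

end Compression

/-- Let `M` be a graphic matrix, `D` a symmetric division of `M`, and
`d ≥ 2`. If the adjacency matrix of the horizontal compression `G^H_D` (rows and columns
in the natural order) contains a `d`-almost mixed minor, then `M` contains a `d`-almost
mixed minor `L` such that (1) `L` is a coarsening of `D`, and (2) each row block of `L`
is the union of at least two row blocks of `D`, and each column block of `L` is the
union of at least two column blocks of `D`. -/
theorem almost_minor_lifting {n s : ℕ} (d : ℕ) (hd : 2 ≤ d)
    (M : BMatrix n n) (hM : Graphic M) (D : Division n n s) (hD : D.Symm)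
    (hE : ∃ E : Division s s d,
      IsAlmostMixedMinor (graphMatrix (horizCompression M D)) E) :
    ∃ L : Division n n d, IsAlmostMixedMinor M L ∧ Coarsens L D ∧
      (∀ i : Fin d, ∃ a a' : Fin n, L.row a = i ∧ L.row a' = i ∧ D.row a ≠ D.row a') ∧
      (∀ j : Fin d, ∃ b b' : Fin n, L.col b = j ∧ L.col b' = j ∧ D.col b ≠ D.col b') := by
  obtain ⟨E, hE⟩ := hE
  exact ⟨D.coarsen E, hE.coarsen hM hD, D.coarsens_coarsen E,
    fun i => D.exists_row_ne_of_nontrivial (hE.rowBlock_nontrivial hd i),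
    fun j => D.exists_col_ne_of_nontrivial (hE.colBlock_nontrivial hd j)⟩

end TwPaper
end

section
/- For every integer d ≥ 1, every d-mixed-free {0,1}-matrix is 2d-almost mixed-free. Equivalently, if a matrix M has a 2d-almost mixed minor, then M has a d-mixed minor. -/
namespace TwPaper


lemma Mixed.mono {m n : ℕ} {M : BMatrix m n} {R R' : Set (Fin m)} {C C' : Set (Fin n)}
    (hR : R ⊆ R') (hC : C ⊆ C') (h : Mixed M R C) : Mixed M R' C' := by
  refine ⟨fun hH => h.1 ?_, fun hV => h.2 ?_⟩
  · intro i hi j hj j' hj'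
    exact hH i (hR hi) j (hC hj) j' (hC hj')
  · intro j hj i hi i' hi'
    exact hV j (hC hj) i (hR hi) i' (hR hi')

/-- Coarsening of a `2d`-division into a `d`-division by merging blocks `2k, 2k+1`. -/
def Division.halve {m n d : ℕ} (D : Division m n (2 * d)) : Division m n d where
  row a := ⟨(D.row a).val / 2, Nat.div_lt_of_lt_mul (by omega)⟩
  col b := ⟨(D.col b).val / 2, Nat.div_lt_of_lt_mul (by omega)⟩
  row_mono := fun _ _ hle => Nat.div_le_div_right (D.row_mono hle)
  col_mono := fun _ _ hle => Nat.div_le_div_right (D.col_mono hle)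
  row_surj := by
    intro i
    obtain ⟨a, ha⟩ := D.row_surj ⟨2 * i.val, by omega⟩
    exact ⟨a, Fin.ext (by simp [ha])⟩
  col_surj := by
    intro j
    obtain ⟨b, hb⟩ := D.col_surj ⟨2 * j.val, by omega⟩
    exact ⟨b, Fin.ext (by simp [hb])⟩

/-- For every integer `d ≥ 1`, every `d`-mixed-free `{0,1}`-matrix
is `2d`-almost mixed-free. -/
theorem mixedfree_almost_mixedfree (d : ℕ) (hd : 1 ≤ d) {m n : ℕ} (M : BMatrix m n)
    (h : MixedFree d M) : AlmostMixedFree (2 * d) M := by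
  rintro ⟨D, hD⟩
  apply h
  refine ⟨D.halve, fun i j => ?_⟩
  have hne : (⟨2 * i.val, by omega⟩ : Fin (2 * d)) ≠ ⟨2 * j.val + 1, by omega⟩ := by
    intro hEq
    have := congrArg Fin.val hEq
    simp at this
    omega
  refine Mixed.mono ?_ ?_ (hD _ _ hne)
  · intro a ha
    simp only [Division.rowBlock, Set.mem_setOf_eq] at ha ⊢
    rw [Division.halve]
    simp only [ha]
    exact Fin.ext (by simp)
  · intro b hb
    simp only [Division.colBlock, Set.mem_setOf_eq] at hb ⊢
    rw [Division.halve]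
    simp only [hb]
    exact Fin.ext (by simp; omega)

end TwPaper
end
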